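/- Let (R, m, k) be a Noetherian local ring and M a finitely generated R-module. For integers s ≥ t, if there exists an R-module isomorphism Hom_R(Sym_R^{s−t}(M), Sym_R^s(M)) ≅ Sym_R^t(M), then the natural map ψ: Sym_R^t(M) → Hom_R(Sym_R^{s−t}(M), Sym_R^s(M)) given by the algebra structure of Sym_R(M) is an isomorphism. -/

import Mathlib

/-!
Formalization of statements from:
"Cohen-Macaulayness and canonical module of residual intersections"
(Chardin, Naeliton, Tran).
-/

noncomputable section
open RingTheory.Sequence
open scoped TensorProduct

/-- The commutativity relation defining the symmetric algebra. -/
inductive SymmRel (R : Type) [CommRing R] (N : Type) [AddCommGroup N] [Module R N] :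
    TensorAlgebra R N → TensorAlgebra R N → Prop
  | comm (x y : N) : SymmRel R N (TensorAlgebra.ι R x * TensorAlgebra.ι R y)
      (TensorAlgebra.ι R y * TensorAlgebra.ι R x)

/-- The symmetric algebra `Sym_R(N)` of the module `N`. -/
noncomputable def SymmetricAlg (R : Type) [CommRing R] (N : Type) [AddCommGroup N]
    [Module R N] : Type :=
  RingQuot (SymmRel R N)

noncomputable instance (R : Type) [CommRing R] (N : Type) [AddCommGroup N] [Module R N] :
    Ring (SymmetricAlg R N) := by
  unfold SymmetricAlg; infer_instance

noncomputable instance (R : Type) [CommRing R] (N : Type) [AddCommGroup N] [Module R N] :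
    Algebra R (SymmetricAlg R N) := by
  unfold SymmetricAlg; infer_instance

private theorem symmetricAlg_mul_comm (R : Type) [CommRing R] (N : Type) [AddCommGroup N]
    [Module R N] (x y : SymmetricAlg R N) : x * y = y * x := by
  have key : ∀ a b : TensorAlgebra R N,
      Commute (RingQuot.mkAlgHom R (SymmRel R N) a) (RingQuot.mkAlgHom R (SymmRel R N) b) := by
    intro a
    induction a using TensorAlgebra.induction with
    | algebraMap r =>
      intro b
      have h : (RingQuot.mkAlgHom R (SymmRel R N)) ((algebraMap R (TensorAlgebra R N)) r)
          = algebraMap R (SymmetricAlg R N) r := AlgHom.commutes _ r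
      rw [h]
      exact Algebra.commute_algebraMap_left r _
    | ι v =>
      intro b
      induction b using TensorAlgebra.induction with
      | algebraMap r =>
        have h : (RingQuot.mkAlgHom R (SymmRel R N)) ((algebraMap R (TensorAlgebra R N)) r)
            = algebraMap R (SymmetricAlg R N) r := AlgHom.commutes _ r
        rw [h]
        exact (Algebra.commute_algebraMap_left r _).symm
      | ι w =>
        have h := RingQuot.mkAlgHom_rel R (@SymmRel.comm R _ N _ _ v w)
        rw [map_mul, map_mul] at h
        exact h
      | mul b c hb hc => rw [map_mul]; exact Commute.mul_right hb hc
      | add b c hb hc => rw [map_add]; exact Commute.add_right hb hc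
    | mul a b ha hb => intro c; rw [map_mul]; exact Commute.mul_left (ha c) (hb c)
    | add a b ha hb => intro c; rw [map_add]; exact Commute.add_left (ha c) (hb c)
  obtain ⟨a, rfl⟩ := RingQuot.mkAlgHom_surjective R (SymmRel R N) x
  obtain ⟨b, rfl⟩ := RingQuot.mkAlgHom_surjective R (SymmRel R N) y
  exact key a b

noncomputable instance (R : Type) [CommRing R] (N : Type) [AddCommGroup N] [Module R N] :
    CommRing (SymmetricAlg R N) :=
  { (inferInstance : Ring (SymmetricAlg R N)) with
    mul_comm := symmetricAlg_mul_comm R N }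

/-- The canonical inclusion `N → Sym_R(N)`. -/
noncomputable def symmIota (R : Type) [CommRing R] (N : Type) [AddCommGroup N]
    [Module R N] : N →ₗ[R] SymmetricAlg R N :=
  (RingQuot.mkAlgHom R (SymmRel R N)).toLinearMap.comp (TensorAlgebra.ι R)

/-- The `k`-th symmetric power `Sym_R^k(N)`, as a submodule of the symmetric algebra. -/
noncomputable def symPow (R : Type) [CommRing R] (N : Type) [AddCommGroup N] [Module R N]
    (k : ℕ) : Submodule R (SymmetricAlg R N) :=
  LinearMap.range (symmIota R N) ^ k

/-- Multiplication pairing between symmetric powers. -/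
noncomputable def symMul (R : Type) [CommRing R] (N : Type) [AddCommGroup N] [Module R N]
    (a b : ℕ) : ↥(symPow R N a) →ₗ[R] ↥(symPow R N b) →ₗ[R] ↥(symPow R N (a + b)) where
  toFun x :=
    { toFun := fun y => ⟨(x : SymmetricAlg R N) * (y : SymmetricAlg R N), by
        rw [symPow, pow_add]
        exact Submodule.mul_mem_mul x.2 y.2⟩
      map_add' := fun y z => Subtype.ext (by simp [mul_add])
      map_smul' := fun c y => Subtype.ext (by simp [mul_smul_comm]) }
  map_add' x x' := LinearMap.ext fun y => Subtype.ext (by simp [add_mul])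
  map_smul' c x := LinearMap.ext fun y => Subtype.ext (by simp [smul_mul_assoc])

/-- A bilinear pairing is perfect if both induced maps to the `Hom` modules
are bijective. -/
def IsPerfectPairing {R M N L : Type} [CommRing R] [AddCommGroup M] [AddCommGroup N]
    [AddCommGroup L] [Module R M] [Module R N] [Module R L]
    (B : M →ₗ[R] N →ₗ[R] L) : Prop :=
  Function.Bijective B ∧ Function.Bijective B.flip

/-- The quotient module `I/𝔞` of two ideals. -/
noncomputable def IdealQuot (R : Type) [CommRing R] (I 𝔞 : Ideal R) : Type :=
  I ⧸ Submodule.comap I.subtype 𝔞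

noncomputable instance (R : Type) [CommRing R] (I 𝔞 : Ideal R) :
    AddCommGroup (IdealQuot R I 𝔞) := by
  unfold IdealQuot; infer_instance

noncomputable instance (R : Type) [CommRing R] (I 𝔞 : Ideal R) :
    Module R (IdealQuot R I 𝔞) := by
  unfold IdealQuot; infer_instance

namespace SymAux

variable {R : Type} [CommRing R] {M : Type} [AddCommGroup M] [Module R M]

/-- Universal property of the symmetric algebra. -/
noncomputable def lift {A : Type} [CommRing A] [Algebra R A] (f : M →ₗ[R] A) :
    SymmetricAlg R M →ₐ[R] A :=
  RingQuot.liftAlgHom R (s := SymmRel R M) ⟨TensorAlgebra.lift R f, by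
    intro x y hxy
    cases hxy with
    | comm a b => simp [mul_comm]⟩

@[simp] theorem lift_iota {A : Type} [CommRing A] [Algebra R A] (f : M →ₗ[R] A) (m : M) :
    lift f (symmIota R M m) = f m := by
  show (RingQuot.liftAlgHom R (s := SymmRel R M) ⟨TensorAlgebra.lift R f, _⟩)
      ((RingQuot.mkAlgHom R (SymmRel R M)) (TensorAlgebra.ι R m)) = f m
  rw [RingQuot.liftAlgHom_mkAlgHom_apply]
  simp

theorem hom_ext {A : Type} [CommRing A] [Algebra R A] {g₁ g₂ : SymmetricAlg R M →ₐ[R] A}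
    (h : ∀ m, g₁ (symmIota R M m) = g₂ (symmIota R M m)) : g₁ = g₂ := by
  have key : g₁.comp (RingQuot.mkAlgHom R (SymmRel R M)) =
      g₂.comp (RingQuot.mkAlgHom R (SymmRel R M)) := by
    apply TensorAlgebra.hom_ext
    ext m
    exact h m
  ext x
  obtain ⟨a, rfl⟩ := RingQuot.mkAlgHom_surjective R (SymmRel R M) x
  exact AlgHom.congr_fun key a

theorem induction {P : SymmetricAlg R M → Prop}
    (algebraMap : ∀ r, P (algebraMap R (SymmetricAlg R M) r))
    (iota : ∀ m, P (symmIota R M m))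
    (mul : ∀ a b, P a → P b → P (a * b))
    (add : ∀ a b, P a → P b → P (a + b)) (x : SymmetricAlg R M) : P x := by
  obtain ⟨a, rfl⟩ := RingQuot.mkAlgHom_surjective R (SymmRel R M) x
  induction a using TensorAlgebra.induction with
  | algebraMap r => rw [AlgHom.commutes]; exact algebraMap r
  | ι m => exact iota m
  | mul a b ha hb => rw [map_mul]; exact mul _ _ ha hb
  | add a b ha hb => rw [map_add]; exact add _ _ ha hb

end SymAux
namespace SymAux

variable {R : Type} [CommRing R] {M : Type} [AddCommGroup M] [Module R M]

noncomputable def dlin : M →ₗ[R] Polynomial (SymmetricAlg R M) where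
  toFun m := Polynomial.C (symmIota R M m) * Polynomial.X
  map_add' a b := by simp [add_mul]
  map_smul' c a := by
    simp only [map_smul, RingHom.id_apply]
    rw [Algebra.smul_def, Algebra.smul_def, Polynomial.algebraMap_apply, map_mul]
    ring

noncomputable def delta : SymmetricAlg R M →ₐ[R] Polynomial (SymmetricAlg R M) :=
  lift dlin

@[simp] theorem delta_iota (m : M) :
    delta (symmIota R M m) = Polynomial.C (symmIota R M m) * Polynomial.X :=
  lift_iota _ m

theorem coeff_delta_mem (x : SymmetricAlg R M) (j : ℕ) :
    (delta x).coeff j ∈ symPow R M j := by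
  induction x using SymAux.induction generalizing j with
  | algebraMap r =>
    rw [AlgHom.commutes, Polynomial.algebraMap_apply, Polynomial.coeff_C]
    split_ifs with hj
    · subst hj
      rw [symPow, pow_zero]
      exact Submodule.algebraMap_mem r
    · exact Submodule.zero_mem _
  | iota m =>
    rw [delta_iota, Polynomial.coeff_C_mul, Polynomial.coeff_X]
    split_ifs with hj
    · rw [mul_one, ← hj, symPow, pow_one]
      exact LinearMap.mem_range_self _ m
    · rw [mul_zero]; exact Submodule.zero_mem _
  | mul a b ha hb =>
    rw [map_mul, Polynomial.coeff_mul]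
    apply Submodule.sum_mem
    intro c hc
    have hcj : c.1 + c.2 = j := Finset.HasAntidiagonal.mem_antidiagonal.mp hc
    rw [symPow, ← hcj, pow_add]
    exact Submodule.mul_mem_mul (ha c.1) (hb c.2)
  | add a b ha hb =>
    rw [map_add, Polynomial.coeff_add]
    exact Submodule.add_mem _ (ha j) (hb j)

theorem delta_of_mem_symPow {j : ℕ} {x : SymmetricAlg R M} (hx : x ∈ symPow R M j) :
    delta x = Polynomial.C x * Polynomial.X ^ j := by
  induction j generalizing x with
  | zero =>
    rw [symPow, pow_zero, Submodule.mem_one] at hx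
    obtain ⟨r, rfl⟩ := hx
    rw [pow_zero, mul_one, AlgHom.commutes, Polynomial.algebraMap_apply]
  | succ j ih =>
    rw [symPow, pow_succ] at hx
    refine Submodule.mul_induction_on hx ?_ ?_
    · intro a ha b hb
      obtain ⟨v, rfl⟩ := hb
      rw [map_mul, ih ha, delta_iota, pow_succ, map_mul]
      ring
    · intro a b hha hhb
      rw [map_add, hha, hhb, map_add, add_mul]

/-- Projection property: an element of `symPow j` lying in `𝔪 • ⊤` lies in `𝔪 • symPow j`. -/
theorem mem_smul_symPow {I : Ideal R} {j : ℕ} {x : SymmetricAlg R M}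
    (hx : x ∈ symPow R M j) (hx' : x ∈ I • (⊤ : Submodule R (SymmetricAlg R M))) :
    x ∈ I • symPow R M j := by
  have key : ∀ y ∈ I • (⊤ : Submodule R (SymmetricAlg R M)),
      (delta y).coeff j ∈ I • symPow R M j := by
    intro y hy
    refine Submodule.smul_induction_on hy ?_ ?_
    · intro c hc z _
      rw [map_smul, Polynomial.coeff_smul]
      exact Submodule.smul_mem_smul hc (coeff_delta_mem z j)
    · intro a b ha hb
      rw [map_add, Polynomial.coeff_add]
      exact Submodule.add_mem _ ha hb
  have := key x hx'
  rwa [delta_of_mem_symPow hx, Polynomial.coeff_C_mul, Polynomial.coeff_X_pow,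
    if_pos rfl, mul_one] at this

end SymAux
namespace SymAux

attribute [local instance] Ideal.Quotient.field

section Residue

variable (R : Type) [CommRing R] [IsLocalRing R] (M : Type) [AddCommGroup M] [Module R M]

local notation "𝔪" => IsLocalRing.maximalIdeal R
local notation "𝕜" => R ⧸ IsLocalRing.maximalIdeal R
local notation "Vq" => M ⧸ (IsLocalRing.maximalIdeal R • ⊤ : Submodule R M)
local notation "SS" => SymmetricAlg R M
local notation "PP" => MvPolynomial (Module.Basis.ofVectorSpaceIndex 𝕜 Vq) 𝕜

example : IsScalarTower R 𝕜 Vq := inferInstance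

private noncomputable def glin : M →ₗ[R] PP :=
  (LinearMap.restrictScalars R
    ((Finsupp.linearCombination 𝕜 fun i => (MvPolynomial.X i : PP)).comp
      (Module.Basis.ofVectorSpace 𝕜 Vq).repr.toLinearMap)).comp
    (Submodule.mkQ _)

private theorem glin_apply (m : M) :
    glin R M m = Finsupp.linearCombination 𝕜 (fun i => (MvPolynomial.X i : PP))
      ((Module.Basis.ofVectorSpace 𝕜 Vq).repr (Submodule.Quotient.mk m)) := rfl

private noncomputable def Gmap : SymmetricAlg R M →ₐ[R] PP := lift (glin R M)

private theorem Gmap_iota (m : M) : Gmap R M (symmIota R M m) = glin R M m :=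
  lift_iota _ m

private theorem msmulP {c : R} (hc : c ∈ 𝔪) (p : PP) : c • p = 0 := by
  rw [Algebra.smul_def, IsScalarTower.algebraMap_apply R 𝕜 PP, Ideal.Quotient.algebraMap_eq,
    Ideal.Quotient.eq_zero_iff_mem.mpr hc, map_zero, zero_mul]

private theorem Gmap_smul_top {x : SymmetricAlg R M}
    (hx : x ∈ 𝔪 • (⊤ : Submodule R (SymmetricAlg R M))) : Gmap R M x = 0 := by
  refine Submodule.smul_induction_on hx ?_ ?_
  · intro c hc z _
    rw [map_smul, msmulP R M hc]
  · intro a b ha hb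
    rw [map_add, ha, hb, add_zero]

private theorem glin_ne_zero {m₀ : M}
    (hm₀ : m₀ ∉ (IsLocalRing.maximalIdeal R • ⊤ : Submodule R M)) : glin R M m₀ ≠ 0 := by
  rw [glin_apply]
  intro hcontra
  have h1 : (Module.Basis.ofVectorSpace 𝕜 Vq).repr (Submodule.Quotient.mk m₀) = 0 := by
    have hinj : Function.Injective
        (Finsupp.linearCombination 𝕜 fun i => (MvPolynomial.X i : PP)) := by
      exact (MvPolynomial.linearIndependent_X _ _)
    exact hinj (by rw [hcontra, map_zero])
  have h2 : (Submodule.Quotient.mk m₀ : Vq) = 0 := by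
    have := congrArg (Module.Basis.ofVectorSpace 𝕜 Vq).repr.symm h1
    rwa [LinearEquiv.symm_apply_apply, map_zero] at this
  exact hm₀ ((Submodule.Quotient.mk_eq_zero _).mp h2)

end Residue

end SymAux
set_option maxHeartbeats 1000000
set_option synthInstance.maxHeartbeats 400000

namespace SymAux

attribute [local instance] Ideal.Quotient.field

section Residue2

variable (R : Type) [CommRing R] [IsLocalRing R] (M : Type) [AddCommGroup M] [Module R M]

local notation "𝔪" => IsLocalRing.maximalIdeal R
local notation "𝕜" => R ⧸ IsLocalRing.maximalIdeal R
local notation "Vq" => M ⧸ (IsLocalRing.maximalIdeal R • ⊤ : Submodule R M)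
local notation "SS" => SymmetricAlg R M
local notation "PP" => MvPolynomial (Module.Basis.ofVectorSpaceIndex 𝕜 Vq) 𝕜

private noncomputable def Jm : Ideal (SymmetricAlg R M) := Ideal.map (algebraMap R SS) 𝔪

private theorem mk_smul_Jm (c : R) (s : SymmetricAlg R M) :
    c • (Ideal.Quotient.mk (Jm R M) s) = Ideal.Quotient.mk (Jm R M) (c • s) :=
  ((Ideal.Quotient.mkₐ R (Jm R M)).toLinearMap.map_smul c s).symm

private theorem torQ : Module.IsTorsionBySet R (SS ⧸ Jm R M) (𝔪 : Set R) := by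
  intro q c
  obtain ⟨s, rfl⟩ := Ideal.Quotient.mk_surjective q
  rw [mk_smul_Jm, Algebra.smul_def, Ideal.Quotient.eq_zero_iff_mem]
  exact Ideal.mul_mem_right s _ (Ideal.mem_map_of_mem _ c.2)

private noncomputable instance modkQ : Module 𝕜 (SS ⧸ Jm R M) := (torQ R M).module

private noncomputable instance towerkQ : IsScalarTower R 𝕜 (SS ⧸ Jm R M) :=
  Module.IsTorsionBySet.isScalarTower (torQ R M)

private theorem mk_smul_kQ (r : R) (q : SS ⧸ Jm R M) :
    (Ideal.Quotient.mk 𝔪 r) • q = r • q :=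
  (torQ R M).mk_smul r q

private noncomputable def w0 : M →ₗ[R] SS ⧸ Jm R M :=
  (Ideal.Quotient.mkₐ R (Jm R M)).toLinearMap.comp (symmIota R M)

private noncomputable def w1 : Vq →ₗ[R] SS ⧸ Jm R M :=
  Submodule.liftQ _ (w0 R M) (by
    intro m hm
    rw [LinearMap.mem_ker]
    refine Submodule.smul_induction_on hm ?_ ?_
    · intro c hc z _
      rw [map_smul]
      exact (torQ R M) (a := ⟨c, hc⟩)
    · intro a b ha hb
      rw [map_add, ha, hb, add_zero])

private theorem w1_mk (m : M) :
    w1 R M (Submodule.Quotient.mk m) = Ideal.Quotient.mk (Jm R M) (symmIota R M m) := rfl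

private noncomputable def wk : Vq →ₗ[𝕜] SS ⧸ Jm R M where
  toFun := w1 R M
  map_add' x y := map_add _ x y
  map_smul' c v := by
    obtain ⟨r, rfl⟩ := Ideal.Quotient.mk_surjective c
    obtain ⟨y, rfl⟩ := Submodule.Quotient.mk_surjective _ v
    show w1 R M ((Ideal.Quotient.mk 𝔪 r) • Submodule.Quotient.mk y) =
      (Ideal.Quotient.mk 𝔪 r) • w1 R M (Submodule.Quotient.mk y)
    rw [Module.Quotient.mk_smul_mk, w1_mk, w1_mk, map_smul, ← mk_smul_Jm, mk_smul_kQ]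

private noncomputable def phik : (R ⧸ IsLocalRing.maximalIdeal R) →+* SS ⧸ Jm R M :=
  Ideal.Quotient.lift 𝔪 ((Ideal.Quotient.mk (Jm R M)).comp (algebraMap R SS)) (by
    intro r hr
    simp only [RingHom.comp_apply, Ideal.Quotient.eq_zero_iff_mem]
    exact Ideal.mem_map_of_mem _ hr)

private theorem phik_mul_eq_smul (c : R ⧸ IsLocalRing.maximalIdeal R) (q : SS ⧸ Jm R M) :
    phik R M c * q = c • q := by
  obtain ⟨r, rfl⟩ := Ideal.Quotient.mk_surjective c
  obtain ⟨s, rfl⟩ := Ideal.Quotient.mk_surjective q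
  rw [mk_smul_kQ, mk_smul_Jm, phik, Ideal.Quotient.lift_mk, RingHom.comp_apply, ← map_mul,
    ← Algebra.smul_def]

/-- A choice of lifts of the basis of `Vq` to `M`. -/
private noncomputable def sig (i : Module.Basis.ofVectorSpaceIndex 𝕜 Vq) : M :=
  (Submodule.Quotient.mk_surjective _ ((Module.Basis.ofVectorSpace 𝕜 Vq) i)).choose

private theorem sig_spec (i : Module.Basis.ofVectorSpaceIndex 𝕜 Vq) :
    (Submodule.Quotient.mk (sig R M i) : Vq) = (Module.Basis.ofVectorSpace 𝕜 Vq) i :=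
  (Submodule.Quotient.mk_surjective _ ((Module.Basis.ofVectorSpace 𝕜 Vq) i)).choose_spec

private noncomputable def Hq : PP →+* SS ⧸ Jm R M :=
  MvPolynomial.eval₂Hom (phik R M)
    (fun i => Ideal.Quotient.mk (Jm R M) (symmIota R M (sig R M i)))

private noncomputable def Hlin : PP →ₗ[𝕜] SS ⧸ Jm R M where
  toFun := Hq R M
  map_add' x y := map_add _ x y
  map_smul' c p := by
    show Hq R M (c • p) = c • Hq R M p
    rw [MvPolynomial.smul_eq_C_mul, map_mul, Hq, MvPolynomial.eval₂Hom_C, phik_mul_eq_smul]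

private theorem key1 :
    (Hlin R M).comp ((Finsupp.linearCombination 𝕜 fun i => (MvPolynomial.X i : PP)).comp
      (Module.Basis.ofVectorSpace 𝕜 Vq).repr.toLinearMap) = wk R M := by
  apply Module.Basis.ext (Module.Basis.ofVectorSpace 𝕜 Vq)
  intro i
  simp only [LinearMap.comp_apply, LinearEquiv.coe_toLinearMap, Module.Basis.repr_self,
    Finsupp.linearCombination_single, one_smul]
  show Hq R M (MvPolynomial.X i) = wk R M ((Module.Basis.ofVectorSpace 𝕜 Vq) i)
  rw [Hq, MvPolynomial.eval₂Hom_X']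
  show _ = w1 R M _
  rw [← sig_spec, w1_mk]

private noncomputable def A1 : SymmetricAlg R M →ₐ[R] SS ⧸ Jm R M where
  toRingHom := (Hq R M).comp (Gmap R M).toRingHom
  commutes' r := by
    show Hq R M (Gmap R M (algebraMap R SS r)) = algebraMap R (SS ⧸ Jm R M) r
    rw [AlgHom.commutes, IsScalarTower.algebraMap_apply R 𝕜 PP, MvPolynomial.algebraMap_eq,
      Ideal.Quotient.algebraMap_eq, Hq, MvPolynomial.eval₂Hom_C, phik,
      Ideal.Quotient.lift_mk, RingHom.comp_apply, Ideal.Quotient.mk_algebraMap]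

private theorem A1_eq : A1 R M = Ideal.Quotient.mkₐ R (Jm R M) := by
  apply hom_ext
  intro m
  show Hq R M (Gmap R M (symmIota R M m)) = Ideal.Quotient.mk (Jm R M) (symmIota R M m)
  rw [Gmap_iota, glin_apply]
  have := LinearMap.congr_fun (key1 R M) (Submodule.Quotient.mk m)
  simp only [LinearMap.comp_apply, LinearEquiv.coe_toLinearMap] at this
  rw [show (Hq R M : PP → SS ⧸ Jm R M) = (Hlin R M : PP → SS ⧸ Jm R M) from rfl]
  rw [this]
  show w1 R M (Submodule.Quotient.mk m) = _
  exact w1_mk R M m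

private theorem ker_Gmap {x : SymmetricAlg R M} (hx : Gmap R M x = 0) :
    x ∈ IsLocalRing.maximalIdeal R • (⊤ : Submodule R (SymmetricAlg R M)) := by
  have h1 : Ideal.Quotient.mk (Jm R M) x = 0 := by
    have h2 := AlgHom.congr_fun (A1_eq R M) x
    rw [Ideal.Quotient.mkₐ_eq_mk] at h2
    rw [← h2]
    show Hq R M (Gmap R M x) = 0
    rw [hx, map_zero]
  rw [Ideal.smul_top_eq_map]
  exact Ideal.Quotient.eq_zero_iff_mem.mp h1

end Residue2

end SymAux
namespace SymAux

attribute [local instance] Ideal.Quotient.field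

section Star

variable (R : Type) [CommRing R] [IsLocalRing R] (M : Type) [AddCommGroup M] [Module R M]

private theorem star {t : ℕ} (l : ℕ) {x : SymmetricAlg R M} (hx : x ∈ symPow R M t)
    {m₀ : M} (hm₀ : m₀ ∉ (IsLocalRing.maximalIdeal R • ⊤ : Submodule R M))
    (hmul : x * (symmIota R M m₀) ^ l ∈
      IsLocalRing.maximalIdeal R • (⊤ : Submodule R (SymmetricAlg R M))) :
    x ∈ IsLocalRing.maximalIdeal R • symPow R M t := by
  have h1 : Gmap R M x * (glin R M m₀) ^ l = 0 := by
    rw [← Gmap_iota, ← map_pow, ← map_mul]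
    exact Gmap_smul_top R M hmul
  have h3 : Gmap R M x = 0 := by
    rcases mul_eq_zero.mp h1 with h | h
    · exact h
    · exact absurd h (pow_ne_zero _ (glin_ne_zero R M hm₀))
  exact mem_smul_symPow hx (ker_Gmap R M h3)

end Star

end SymAux
namespace SymAux

attribute [local instance] Ideal.Quotient.field

section Main

variable (R : Type) [CommRing R] [IsLocalRing R] [IsNoetherianRing R]
  (M : Type) [AddCommGroup M] [Module R M] [Module.Finite R M]

omit [IsLocalRing R] [IsNoetherianRing R] in
private theorem symPow_fg (j : ℕ) : (symPow R M j).FG :=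
  Submodule.FG.pow (by
    rw [← Submodule.map_top]
    exact (Module.Finite.fg_top (R := R) (M := M)).map _) j

private theorem main_aux (t l : ℕ)
    (e : (↥(symPow R M l) →ₗ[R] ↥(symPow R M (t + l))) ≃ₗ[R] ↥(symPow R M t))
    (y : ↥(symPow R M l))
    (hkey : ∀ x : ↥(symPow R M t), (x : SymmetricAlg R M) * (y : SymmetricAlg R M) ∈
      IsLocalRing.maximalIdeal R • (⊤ : Submodule R (SymmetricAlg R M)) →
      (x : SymmetricAlg R M) ∈ IsLocalRing.maximalIdeal R • symPow R M t) :
    Function.Bijective (symMul R M t l) := by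
  classical
  set 𝔪 := IsLocalRing.maximalIdeal R with h𝔪
  set ψ := symMul R M t l with hψ
  set lam := e.toLinearMap ∘ₗ ψ with hlam
  haveI ht : Module.Finite R ↥(symPow R M t) := Module.Finite.iff_fg.mpr (symPow_fg R M t)
  -- key property of lam
  have keylam : ∀ x : ↥(symPow R M t),
      lam x ∈ 𝔪 • (⊤ : Submodule R ↥(symPow R M t)) →
      x ∈ 𝔪 • (⊤ : Submodule R ↥(symPow R M t)) := by
    intro x hxl
    have h1 : ψ x ∈ 𝔪 • (⊤ : Submodule R
        (↥(symPow R M l) →ₗ[R] ↥(symPow R M (t + l)))) := by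
      have hx' : ψ x = e.symm (lam x) := by
        rw [hlam]; simp
      rw [hx']
      have hmem := Submodule.mem_map_of_mem (f := e.symm.toLinearMap) hxl
      rw [Submodule.map_smul''] at hmem
      exact Submodule.smul_mono le_rfl le_top hmem
    have h3 : (ψ x) y ∈ 𝔪 • (⊤ : Submodule R ↥(symPow R M (t + l))) := by
      have hmem := Submodule.mem_map_of_mem (f := (LinearMap.applyₗ y :
        (↥(symPow R M l) →ₗ[R] ↥(symPow R M (t + l))) →ₗ[R] ↥(symPow R M (t + l)))) h1
      rw [Submodule.map_smul''] at hmem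
      exact Submodule.smul_mono le_rfl le_top hmem
    have h2 : ((ψ x) y : SymmetricAlg R M) ∈ 𝔪 • (⊤ : Submodule R (SymmetricAlg R M)) := by
      have hmem := Submodule.mem_map_of_mem (f := (symPow R M (t + l)).subtype) h3
      rw [Submodule.map_smul''] at hmem
      exact Submodule.smul_mono le_rfl le_top hmem
    have h4 : (x : SymmetricAlg R M) ∈ 𝔪 • symPow R M t := hkey x h2
    have h5 : (x : SymmetricAlg R M) ∈ Submodule.map (symPow R M t).subtype
        (𝔪 • (⊤ : Submodule R ↥(symPow R M t))) := by
      rw [Submodule.map_smul'', Submodule.map_subtype_top]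
      exact h4
    obtain ⟨x', hx', hval⟩ := h5
    rwa [show x' = x from Subtype.ext hval] at hx'
  -- pass to the quotient
  have hle : 𝔪 • (⊤ : Submodule R ↥(symPow R M t)) ≤
      Submodule.comap lam (𝔪 • (⊤ : Submodule R ↥(symPow R M t))) := by
    intro a ha
    have := Submodule.mem_map_of_mem (f := lam) ha
    rw [Submodule.map_smul''] at this
    exact Submodule.smul_mono le_rfl le_top this
  letI : AddCommGroup ↥(symPow R M t) := Submodule.addCommGroup _
  set lamq := Submodule.mapQ _ _ lam hle with hlamq
  set lamk : (↥(symPow R M t) ⧸ (𝔪 • ⊤ : Submodule R ↥(symPow R M t))) →ₗ[R ⧸ 𝔪]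
      (↥(symPow R M t) ⧸ (𝔪 • ⊤ : Submodule R ↥(symPow R M t))) :=
    { toFun := lamq
      map_add' := fun a b => map_add _ a b
      map_smul' := by
        intro c v
        obtain ⟨r, rfl⟩ := Ideal.Quotient.mk_surjective c
        obtain ⟨a, rfl⟩ := Submodule.Quotient.mk_surjective _ v
        show lamq ((Ideal.Quotient.mk 𝔪 r) • Submodule.Quotient.mk a) =
          (Ideal.Quotient.mk 𝔪 r) • lamq (Submodule.Quotient.mk a)
        rw [Module.Quotient.mk_smul_mk, hlamq, Submodule.mapQ_apply, Submodule.mapQ_apply,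
          map_smul, Module.Quotient.mk_smul_mk] } with hlamk
  have hinjk : Function.Injective lamk := by
    refine (injective_iff_map_eq_zero _).mpr ?_
    intro v hv
    obtain ⟨a, rfl⟩ := Submodule.Quotient.mk_surjective _ v
    have hva : Submodule.Quotient.mk (lam a) = (0 : ↥(symPow R M t) ⧸
        (𝔪 • ⊤ : Submodule R ↥(symPow R M t))) := by
      rw [← hv]
      show _ = lamq (Submodule.Quotient.mk a)
      rw [hlamq, Submodule.mapQ_apply]
    have := keylam a ((Submodule.Quotient.mk_eq_zero _).mp hva)
    exact (Submodule.Quotient.mk_eq_zero _).mpr this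
  haveI : Module.Finite (R ⧸ 𝔪) (↥(symPow R M t) ⧸ (𝔪 • ⊤ : Submodule R ↥(symPow R M t))) :=
    Module.Finite.of_restrictScalars_finite R _ _
  have hsurjk : Function.Surjective lamk := (LinearMap.injective_iff_surjective (f := lamk)).mp hinjk
  have hrange : (⊤ : Submodule R ↥(symPow R M t)) ≤ LinearMap.range lam ⊔ 𝔪 • ⊤ := by
    intro n _
    obtain ⟨v, hv⟩ := hsurjk (Submodule.Quotient.mk n)
    obtain ⟨a, rfl⟩ := Submodule.Quotient.mk_surjective _ v
    have hmk : Submodule.Quotient.mk (lam a) = (Submodule.Quotient.mk n : ↥(symPow R M t) ⧸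
        (𝔪 • ⊤ : Submodule R ↥(symPow R M t))) := by
      rw [← hv]
      show _ = lamq (Submodule.Quotient.mk a)
      rw [hlamq, Submodule.mapQ_apply]
    have hd : lam a - n ∈ 𝔪 • (⊤ : Submodule R ↥(symPow R M t)) :=
      (Submodule.Quotient.eq _).mp hmk
    have hn : n = lam a - (lam a - n) := by abel
    rw [hn]
    exact Submodule.sub_mem _ (Submodule.mem_sup_left (LinearMap.mem_range_self lam a))
      (Submodule.mem_sup_right hd)
  have htop : (⊤ : Submodule R ↥(symPow R M t)) ≤ LinearMap.range lam :=
    Submodule.le_of_le_smul_of_le_jacobson_bot (Module.Finite.fg_top)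
      (IsLocalRing.maximalIdeal_le_jacobson ⊥) hrange
  have hsurj : Function.Surjective lam := by
    rw [← LinearMap.range_eq_top]
    exact top_le_iff.mp htop
  haveI : IsNoetherian R ↥(symPow R M t) := inferInstance
  have hinj : Function.Injective lam := IsNoetherian.injective_of_surjective_endomorphism lam hsurj
  have hdecomp : ψ = e.symm.toLinearMap ∘ₗ lam := by
    ext a : 1
    rw [hlam]
    simp
  rw [hψ] at hdecomp ⊢
  rw [hdecomp, LinearMap.coe_comp]
  exact e.symm.bijective.comp ⟨hinj, hsurj⟩

end Main

end SymAux
/-- **Lemma 6.6.** Let `(R, 𝔪, k)` be a Noetherian local ring and `M` a finitely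
generated `R`-module.  For `s = t + l ≥ t`, if there is an `R`-module isomorphism
`Hom_R(Sym^{s-t}(M), Sym^s(M)) ≅ Sym^t(M)`, then the natural multiplication map
`ψ : Sym^t(M) → Hom_R(Sym^{s-t}(M), Sym^s(M))` is an isomorphism. -/
theorem sym_hom_iso_implies_mul_iso
    (R : Type) [CommRing R] [IsLocalRing R] [IsNoetherianRing R]
    (M : Type) [AddCommGroup M] [Module R M] [Module.Finite R M]
    (t l : ℕ)
    (h : Nonempty ((↥(symPow R M l) →ₗ[R] ↥(symPow R M (t + l))) ≃ₗ[R]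
      ↥(symPow R M t))) :
    Function.Bijective (symMul R M t l) := by
  classical
  obtain ⟨e⟩ := h
  by_cases hl : l = 0
  · subst hl
    refine SymAux.main_aux R M t 0 e ⟨1, by
      rw [symPow, pow_zero]
      exact (Submodule.mem_one).mpr ⟨1, map_one _⟩⟩ ?_
    intro x hx
    exact SymAux.mem_smul_symPow x.2 (by rwa [mul_one] at hx)
  · by_cases hm : ∃ m₀ : M, m₀ ∉ (IsLocalRing.maximalIdeal R • ⊤ : Submodule R M)
    · obtain ⟨m₀, hm₀⟩ := hm
      refine SymAux.main_aux R M t l e ⟨(symmIota R M m₀) ^ l, by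
        rw [symPow]
        exact Submodule.pow_mem_pow _ (LinearMap.mem_range_self _ m₀) l⟩ ?_
      intro x hx
      exact SymAux.star R M l x.2 hm₀ hx
    · push_neg at hm
      have htop : (⊤ : Submodule R M) ≤ IsLocalRing.maximalIdeal R • ⊤ := fun m _ => hm m
      have hbot : (⊤ : Submodule R M) = ⊥ :=
        Submodule.eq_bot_of_le_smul_of_le_jacobson_bot _ ⊤ Module.Finite.fg_top htop
          (IsLocalRing.maximalIdeal_le_jacobson ⊥)
      haveI hMsub : Subsingleton M := ⟨fun a b => by
        have ha : a ∈ (⊥ : Submodule R M) := hbot ▸ Submodule.mem_top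
        have hb : b ∈ (⊥ : Submodule R M) := hbot ▸ Submodule.mem_top
        rw [Submodule.mem_bot] at ha hb
        rw [ha, hb]⟩
      have hrange : LinearMap.range (symmIota R M) = ⊥ := by
        rw [show symmIota R M = 0 from Subsingleton.elim _ _, LinearMap.range_zero]
      have hSl : symPow R M l = ⊥ := by
        obtain ⟨n, rfl⟩ := Nat.exists_eq_succ_of_ne_zero hl
        rw [symPow, hrange, pow_succ, Submodule.mul_bot]
      have hSl' : ∀ z ∈ symPow R M l, z = (0 : SymmetricAlg R M) :=
        (Submodule.eq_bot_iff _).mp hSl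
      haveI hsub1 : Subsingleton ↥(symPow R M l) := ⟨fun a b => Subtype.ext (by
        rw [hSl' a.1 a.2, hSl' b.1 b.2])⟩
      haveI hsub2 : Subsingleton (↥(symPow R M l) →ₗ[R] ↥(symPow R M (t + l))) :=
        ⟨fun f g => LinearMap.ext fun z => by
          rw [Subsingleton.elim z 0, map_zero, map_zero]⟩
      haveI hsub3 : Subsingleton ↥(symPow R M t) := e.symm.toEquiv.subsingleton
      exact ⟨fun a b _ => Subsingleton.elim a b, fun f => ⟨0, Subsingleton.elim _ _⟩⟩
end
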